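/- arXiv:1809.04930 — 2 statements merged into one kernel-verified Lean document; each statement's English description precedes it below -/
import Mathlib

section
/- For every natural number d ≥ 1 and every k with 0 ≤ k ≤ d, the quantity p_k(d) = ∑_{s=k}^{d} (-1)^{k+s}/s! * C(s,k) is nonnegative. -/
/-- The limiting intersection probability `p_k(d)` as a real number. -/
noncomputable def interProb (d k : ℕ) : ℝ :=
  ∑ s ∈ Finset.Icc k d, ((-1 : ℝ) ^ (k + s) / (Nat.factorial s)) * (s.choose k)

/-!
Substituting `s = k + j` and using `(k + j).choose k / (k + j)! = 1 / (k! j!)` gives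
`p_k(d) = (1 / k!) ∑_{j < d + 1 - k} (-1)^j / j!`, a partial sum of the series of `e⁻¹`
(empty when `k > d`, as `d + 1 - k` truncates to `0`). Partial sums of an alternating series
with nonnegative decreasing terms are nonnegative: peeling off the first two terms leaves
`f 0 - f 1 ≥ 0` plus a shorter sum of the same kind.
-/

open Finset Nat

theorem Antitone.alternating_sum_nonneg {E : Type*} [Ring E] [PartialOrder E] [IsOrderedRing E]
    {f : ℕ → E} (hfa : Antitone f) (hf0 : 0 ≤ f) (n : ℕ) :
    0 ≤ ∑ i ∈ range n, (-1) ^ i * f i := by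
  induction n using Nat.twoStepInduction generalizing f with
  | zero => simp
  | one => simpa using hf0 0
  | more n ih _ =>
    have hsplit : ∑ i ∈ range (n + 2), (-1) ^ i * f i
        = (f 0 - f 1) + ∑ i ∈ range n, (-1) ^ i * f (i + 2) := by
      simp only [sum_range_succ', pow_succ, mul_neg, mul_one, neg_neg, pow_zero, one_mul, zero_add,
        neg_one_mul, Nat.add_assoc, Nat.reduceAdd]
      abel
    rw [hsplit]
    exact add_nonneg (sub_nonneg.mpr (hfa zero_le_one))
      (ih (hfa.comp_monotone (add_left_mono (a := 2))) (fun i => hf0 (i + 2)))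

theorem interProb_eq_mul_sum_range (d k : ℕ) :
    interProb d k = (k ! : ℝ)⁻¹ * ∑ j ∈ range (d + 1 - k), (-1) ^ j * (j ! : ℝ)⁻¹ := by
  rw [interProb, ← Ico_add_one_right_eq_Icc, sum_Ico_eq_sum_range, mul_sum]
  refine sum_congr rfl fun j _ => ?_
  rw [Nat.cast_add_choose, ← add_assoc, ← two_mul, pow_add, pow_mul, neg_one_sq, one_pow, one_mul]
  field_simp

theorem antitone_inv_factorial : Antitone fun n : ℕ => (n ! : ℝ)⁻¹ :=
  fun _ _ hmn => inv_anti₀ (by positivity) (by exact_mod_cast factorial_le hmn)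

theorem interProb_nonneg_general (d k : ℕ) :
    0 ≤ interProb d k := by
  rw [interProb_eq_mul_sum_range]
  exact mul_nonneg (by positivity)
    (antitone_inv_factorial.alternating_sum_nonneg (fun _ => by positivity) _)

theorem interProb_nonneg (d k : ℕ) (hd : 1 ≤ d) (hk : k ≤ d) :
    0 ≤ interProb d k :=
  interProb_nonneg_general d k
end

section
/- For every natural number d ≥ 1, the expected number of intersection points equals 1: ∑_{k=0}^{d} k * p_k(d) = 1, where p_k(d) = ∑_{s=k}^{d} (-1)^{k+s}/s! * C(s,k). -/
lemma alt_sum_choose_real (n : ℕ) :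
    ∑ i ∈ Finset.range (n + 1), ((-1 : ℝ)) ^ i * (n.choose i) =
      if n = 0 then 1 else 0 := by
  have h := Int.alternating_sum_range_choose (n := n)
  have : ((∑ i ∈ Finset.range (n + 1), (-1 : ℤ) ^ i * (n.choose i) : ℤ) : ℝ)
      = ((if n = 0 then 1 else 0 : ℤ) : ℝ) := by rw [h]
  push_cast at this
  convert this using 2 <;> simp

lemma my_inner_sum (s : ℕ) :
    ∑ k ∈ Finset.range (s + 1), ((-1 : ℝ)) ^ k * k * (s.choose k) =
      if s = 1 then -1 else 0 := by
  cases s with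
  | zero => simp
  | succ n =>
    rw [Finset.sum_range_succ']
    simp only [Nat.cast_zero, mul_zero, zero_mul, add_zero]
    push_cast
    have key : ∀ k, ((-1 : ℝ)) ^ (k + 1) * (k + 1) * ((n + 1).choose (k + 1)) =
        -((n : ℝ) + 1) * ((-1 : ℝ) ^ k * (n.choose k)) := by
      intro k
      have h : (n + 1) * n.choose k = (n + 1).choose (k + 1) * (k + 1) :=
        Nat.add_one_mul_choose_eq n k
      have h' : ((n : ℝ) + 1) * (n.choose k) = ((n + 1).choose (k + 1)) * ((k : ℝ) + 1) := by
        exact_mod_cast congrArg (Nat.cast : ℕ → ℝ) h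
      calc ((-1 : ℝ)) ^ (k + 1) * ((k : ℝ) + 1) * ((n + 1).choose (k + 1))
          = (-1 : ℝ) ^ k * (-1) * (((n + 1).choose (k + 1)) * ((k : ℝ) + 1)) := by
            rw [pow_succ]; ring
        _ = (-1 : ℝ) ^ k * (-1) * (((n : ℝ) + 1) * (n.choose k)) := by rw [← h']
        _ = -((n : ℝ) + 1) * ((-1 : ℝ) ^ k * (n.choose k)) := by ring
    calc ∑ k ∈ Finset.range (n + 1),
          ((-1 : ℝ)) ^ (k + 1) * ((k : ℝ) + 1) * ((n + 1).choose (k + 1))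
        = ∑ k ∈ Finset.range (n + 1), -((n : ℝ) + 1) * ((-1 : ℝ) ^ k * (n.choose k)) := by
          refine Finset.sum_congr rfl fun k _ => ?_
          have := key k
          push_cast at this ⊢
          linarith [this]
      _ = -((n : ℝ) + 1) * ∑ k ∈ Finset.range (n + 1), ((-1 : ℝ)) ^ k * (n.choose k) := by
          rw [Finset.mul_sum]
      _ = -((n : ℝ) + 1) * (if n = 0 then 1 else 0) := by rw [alt_sum_choose_real]
      _ = if n = 0 then -1 else 0 := by
          split_ifs with h
          · subst h; norm_num
          · ring

theorem expected_intersections_eq_one (d : ℕ) (hd : 1 ≤ d) :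
    ∑ k ∈ Finset.range (d + 1), (k : ℝ) * interProb d k = 1 := by
  unfold interProb
  have swap :
      ∑ k ∈ Finset.range (d + 1), ∑ s ∈ Finset.Icc k d,
        (k : ℝ) * (((-1 : ℝ) ^ (k + s) / (Nat.factorial s)) * (s.choose k)) =
      ∑ s ∈ Finset.range (d + 1), ∑ k ∈ Finset.range (s + 1),
        (k : ℝ) * (((-1 : ℝ) ^ (k + s) / (Nat.factorial s)) * (s.choose k)) := by
    apply Finset.sum_comm'
    intro k s
    simp only [Finset.mem_range, Finset.mem_Icc]
    omega
  calc ∑ k ∈ Finset.range (d + 1), (k : ℝ) *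
        ∑ s ∈ Finset.Icc k d, (((-1 : ℝ) ^ (k + s) / (Nat.factorial s)) * (s.choose k))
      = ∑ k ∈ Finset.range (d + 1), ∑ s ∈ Finset.Icc k d,
          (k : ℝ) * (((-1 : ℝ) ^ (k + s) / (Nat.factorial s)) * (s.choose k)) := by
        refine Finset.sum_congr rfl fun k _ => ?_; rw [Finset.mul_sum]
    _ = ∑ s ∈ Finset.range (d + 1), ∑ k ∈ Finset.range (s + 1),
          (k : ℝ) * (((-1 : ℝ) ^ (k + s) / (Nat.factorial s)) * (s.choose k)) := swap
    _ = ∑ s ∈ Finset.range (d + 1),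
          ((-1 : ℝ) ^ s / (Nat.factorial s)) *
            ∑ k ∈ Finset.range (s + 1), ((-1 : ℝ)) ^ k * k * (s.choose k) := by
        refine Finset.sum_congr rfl fun s _ => ?_
        rw [Finset.mul_sum]
        refine Finset.sum_congr rfl fun k _ => ?_
        rw [pow_add]
        ring
    _ = ∑ s ∈ Finset.range (d + 1),
          (if s = 1 then ((-1 : ℝ) ^ s / (Nat.factorial s)) * (-1) else 0) := by
        refine Finset.sum_congr rfl fun s _ => ?_
        rw [my_inner_sum]
        split_ifs <;> simp
    _ = 1 := by
        rw [Finset.sum_ite_eq' (Finset.range (d + 1)) 1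
          (fun s => ((-1 : ℝ) ^ s / (Nat.factorial s)) * (-1))]
        rw [if_pos (Finset.mem_range.mpr (by omega))]
        norm_num
end
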